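/- arXiv:1109.2104 — 2 statements merged into one kernel-verified Lean document; each statement's English description precedes it below -/
import Mathlib

section
/- Let (aⱼ)_{j∈ℕ} be a sequence of nonnegative real numbers such that the Cesàro averages converge to zero: (1/N) Σ_{j<N} aⱼ → 0 as N → ∞. Then there exists a set S ⊆ ℕ of natural density one such that aⱼ → 0 along S, i.e. lim_{N→∞} |S ∩ {0,…,N-1}|/N = 1 and for every ε > 0 all but finitely many j ∈ S satisfy aⱼ < ε. -/
open Filter

/-- If the Cesàro averages of a nonnegative sequence tend to zero, then there is a
set `S ⊆ ℕ` of natural density one along which the sequence tends to zero. -/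
theorem exists_density_one_subset_tendsto_zero
    (a : ℕ → ℝ) (hpos : ∀ j, 0 ≤ a j)
    (hC : Tendsto (fun N : ℕ => (1 / (N : ℝ)) * ∑ j ∈ Finset.range N, a j)
      atTop (nhds 0)) :
    ∃ S : Set ℕ,
      Tendsto (fun N : ℕ => ((S ∩ Set.Iio N).ncard : ℝ) / (N : ℝ)) atTop (nhds 1) ∧
      ∀ ε > (0 : ℝ), {j ∈ S | ε ≤ a j}.Finite := by
  classical
  -- Step 1: for each `k`, eventually the density of `{j < M : a j ≥ 1/(k+1)}` is ≤ 1/(k+1).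
  have step1 : ∀ k : ℕ, ∃ T : ℕ, ∀ M ≥ T,
      (((Finset.range M).filter (fun j => 1 / ((k : ℝ) + 1) ≤ a j)).card : ℝ) / M
        ≤ 1 / ((k : ℝ) + 1) := by
    intro k
    have hK : (0 : ℝ) < (k : ℝ) + 1 := by positivity
    have h1 : Tendsto (fun M : ℕ => ((k : ℝ) + 1) *
        ((1 / (M : ℝ)) * ∑ j ∈ Finset.range M, a j)) atTop (nhds 0) := by
      simpa using hC.const_mul ((k : ℝ) + 1)
    have h2 : ∀ᶠ M : ℕ in atTop, ((k : ℝ) + 1) *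
        ((1 / (M : ℝ)) * ∑ j ∈ Finset.range M, a j) < 1 / ((k : ℝ) + 1) :=
      h1.eventually (gt_mem_nhds (by positivity))
    have h3 : ∀ᶠ M : ℕ in atTop, (1 : ℕ) ≤ M := eventually_ge_atTop 1
    rw [← eventually_atTop]
    filter_upwards [h2, h3] with M havg hM1
    have hMpos : (0 : ℝ) < (M : ℝ) := by exact_mod_cast hM1
    set c : ℝ := (((Finset.range M).filter (fun j => 1 / ((k : ℝ) + 1) ≤ a j)).card : ℝ)
    set s : ℝ := ∑ j ∈ Finset.range M, a j
    have hcard : c * (1 / ((k : ℝ) + 1)) ≤ s := by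
      have h4 := Finset.card_nsmul_le_sum
        ((Finset.range M).filter (fun j => 1 / ((k : ℝ) + 1) ≤ a j)) a (1 / ((k : ℝ) + 1))
        (fun x hx => (Finset.mem_filter.mp hx).2)
      have h5 : ∑ j ∈ (Finset.range M).filter (fun j => 1 / ((k : ℝ) + 1) ≤ a j), a j ≤ s :=
        Finset.sum_le_sum_of_subset_of_nonneg (Finset.filter_subset _ _)
          (fun i _ _ => hpos i)
      calc c * (1 / ((k : ℝ) + 1))
          = (((Finset.range M).filter (fun j => 1 / ((k : ℝ) + 1) ≤ a j)).card : ℕ)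
              • (1 / ((k : ℝ) + 1)) := by rw [nsmul_eq_mul]
        _ ≤ _ := h4
        _ ≤ s := h5
    have hc : c ≤ ((k : ℝ) + 1) * s := by
      rw [mul_one_div, div_le_iff₀ hK] at hcard
      linarith [hcard]
    calc c / M ≤ (((k : ℝ) + 1) * s) / M := by gcongr
      _ = ((k : ℝ) + 1) * ((1 / (M : ℝ)) * s) := by ring
      _ ≤ 1 / ((k : ℝ) + 1) := le_of_lt havg
  choose T hT using step1
  -- Step 2: thresholds `N k`, strictly increasing enough.
  set N : ℕ → ℕ := fun k => (Finset.range (k + 1)).sup T + k + 1 with hNdef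
  have hTN : ∀ k, T k ≤ N k := by
    intro k
    have := Finset.le_sup (f := T) (Finset.self_mem_range_succ k)
    simp only [hNdef]
    omega
  have hkN : ∀ k, k + 1 ≤ N k := fun k => by simp [hNdef]
  have hNmono : Monotone N := by
    intro i j hij
    have : (Finset.range (i + 1)).sup T ≤ (Finset.range (j + 1)).sup T :=
      Finset.sup_mono (Finset.range_subset_range.mpr (by omega))
    simp only [hNdef]; omega
  -- Step 3: the index function kM.
  set kM : ℕ → ℕ := fun M => Nat.findGreatest (fun k => N k ≤ M) M with hkMdef
  have hkM_ge : ∀ k M, N k ≤ M → k ≤ kM M := fun k M h =>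
    Nat.le_findGreatest (le_trans (by have := hkN k; omega) h) h
  have hkM_spec : ∀ M, N 0 ≤ M → N (kM M) ≤ M := fun M h =>
    Nat.findGreatest_spec (P := fun k => N k ≤ M) (Nat.zero_le M) h
  have hkM_mono : ∀ j M, N 0 ≤ j → j ≤ M → kM j ≤ kM M := by
    intro j M h hjM
    exact Nat.le_findGreatest (le_trans (Nat.findGreatest_le j) hjM)
      (le_trans (hkM_spec j h) hjM)
  have hkM_tendsto : Tendsto kM atTop atTop := by
    rw [tendsto_atTop]
    intro k
    rw [eventually_atTop]
    exact ⟨N k, fun M h => hkM_ge k M h⟩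
  -- Step 4: the bad set B and good set S.
  set B : Set ℕ := {j | N 0 ≤ j ∧ (1 : ℝ) / ((kM j : ℝ) + 1) ≤ a j} with hBdef
  refine ⟨Bᶜ, ?_, ?_⟩
  · -- density one
    have hcoeS : ∀ M : ℕ, Bᶜ ∩ Set.Iio M = ↑((Finset.range M).filter (fun j => j ∉ B)) := by
      intro M
      ext j
      simp only [Set.mem_inter_iff, Set.mem_compl_iff, Set.mem_Iio, Finset.coe_filter,
        Finset.mem_range, Set.mem_setOf_eq]
      tauto
    have hcardsum : ∀ M : ℕ,
        ((Finset.range M).filter (fun j => j ∈ B)).card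
          + ((Finset.range M).filter (fun j => j ∉ B)).card = M := by
      intro M
      have := Finset.card_filter_add_card_filter_not
        (s := Finset.range M) (fun j => j ∈ B)
      simpa using this
    -- bad density bound
    have hBbound : ∀ M : ℕ, N 0 ≤ M →
        ((((Finset.range M).filter (fun j => j ∈ B)).card : ℝ)) / M
          ≤ 1 / ((kM M : ℝ) + 1) := by
      intro M hM
      have hsub : (Finset.range M).filter (fun j => j ∈ B)
          ⊆ (Finset.range M).filter (fun j => 1 / ((kM M : ℝ) + 1) ≤ a j) := by
        intro j hj
        rw [Finset.mem_filter] at hj ⊢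
        obtain ⟨hjr, hjN0, hja⟩ := hj
        refine ⟨hjr, le_trans ?_ hja⟩
        have hjM : j ≤ M := le_of_lt (Finset.mem_range.mp hjr)
        have h5 : kM j ≤ kM M := hkM_mono j M hjN0 hjM
        apply one_div_le_one_div_of_le (by positivity)
        have : (kM j : ℝ) ≤ (kM M : ℝ) := by exact_mod_cast h5
        linarith
      have hTM : T (kM M) ≤ M := le_trans (hTN (kM M)) (hkM_spec M hM)
      have h6 := hT (kM M) M hTM
      refine le_trans ?_ h6
      have hMpos : (0 : ℝ) < (M : ℝ) := by
        have : 1 ≤ N 0 := hkN 0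
        have : 1 ≤ M := le_trans this hM
        exact_mod_cast this
      gcongr
    have hB0 : Tendsto (fun M : ℕ =>
        (((Finset.range M).filter (fun j => j ∈ B)).card : ℝ) / M) atTop (nhds 0) := by
      apply tendsto_of_tendsto_of_tendsto_of_le_of_le'
        (tendsto_const_nhds) (tendsto_one_div_add_atTop_nhds_zero_nat.comp hkM_tendsto)
      · filter_upwards [eventually_ge_atTop 1] with M hM
        positivity
      · filter_upwards [eventually_ge_atTop (N 0)] with M hM
        exact hBbound M hM
    have key : ∀ᶠ M : ℕ in atTop,
        (1 : ℝ) - (((Finset.range M).filter (fun j => j ∈ B)).card : ℝ) / M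
          = (((Bᶜ ∩ Set.Iio M).ncard : ℝ)) / M := by
      filter_upwards [eventually_ge_atTop 1] with M hM
      have hMne : (M : ℝ) ≠ 0 := by positivity
      rw [hcoeS M, Set.ncard_coe_finset]
      have h7 := hcardsum M
      have h8 : (((Finset.range M).filter (fun j => j ∉ B)).card : ℝ)
          = (M : ℝ) - (((Finset.range M).filter (fun j => j ∈ B)).card : ℝ) := by
        have : (((Finset.range M).filter (fun j => j ∈ B)).card : ℝ)
            + (((Finset.range M).filter (fun j => j ∉ B)).card : ℝ) = (M : ℝ) := by
          exact_mod_cast h7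
        linarith
      rw [h8, sub_div, div_self hMne]
    have h9 : Tendsto (fun M : ℕ =>
        (1 : ℝ) - (((Finset.range M).filter (fun j => j ∈ B)).card : ℝ) / M) atTop (nhds 1) := by
      have := tendsto_const_nhds (x := (1 : ℝ)) (f := atTop (α := ℕ)) |>.sub hB0
      simpa using this
    exact Tendsto.congr' key h9
  · -- tail finiteness
    intro ε hε
    obtain ⟨k, hk⟩ := exists_nat_ge (1 / ε)
    have hk' : (1 : ℝ) / ((k : ℝ) + 1) ≤ ε := by
      rw [div_le_iff₀ (by positivity)]
      have h10 : 1 / ε ≤ (k : ℝ) + 1 := le_trans hk (by linarith)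
      calc (1 : ℝ) = ε * (1 / ε) := by field_simp
        _ ≤ ε * ((k : ℝ) + 1) := by
            exact mul_le_mul_of_nonneg_left h10 (le_of_lt hε)
        _ = ε * ((k : ℝ) + 1) := rfl
    apply Set.Finite.subset (Set.finite_Iio (N k))
    intro j hj
    obtain ⟨hjS, hja⟩ := hj
    by_contra hlt
    have hNkj : N k ≤ j := not_lt.mp hlt
    apply hjS
    refine ⟨le_trans (hNmono (Nat.zero_le k)) hNkj, ?_⟩
    have hkk : k ≤ kM j := hkM_ge k j hNkj
    have h11 : (1 : ℝ) / ((kM j : ℝ) + 1) ≤ 1 / ((k : ℝ) + 1) := by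
      apply one_div_le_one_div_of_le (by positivity)
      have : (k : ℝ) ≤ (kM j : ℝ) := by exact_mod_cast hkk
      linarith
    exact le_trans h11 (le_trans hk' hja)
end

section
/- (Karamata's Tauberian theorem) Let μ be a measure on [0, ∞) such that the Laplace transform L(t) = ∫ e^{-tλ} dμ(λ) is finite for every t > 0. Let r > 0 and C ≥ 0 and suppose t^r · L(t) → C as t → 0⁺. Then μ([0, x]) / x^r → C / Γ(r + 1) as x → ∞, where Γ is the Gamma function. -/
open Filter MeasureTheory Real Set Topology Polynomial

/-!
Karamata's argument. The rescaled measures `m_t := t ^ r • (x ↦ t x)_* μ` satisfy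
`∫ e^{-cy} dm_t = t ^ r L(c t) → C c^{-r}`, which is the Laplace transform at `c` of
`m₀ := C / Γ(r) · y^{r-1} dy` on `(0, ∞)`. Pushing `e^{-y} dm` forward along `y ↦ e^{-y}` turns
the Laplace transforms at `c = 1, 2, 3, …` into the moments of measures on `[0, 1]`, so by
Weierstrass approximation `∫ e^{-y} g(e^{-y}) dm_t → ∫ e^{-y} g(e^{-y}) dm₀` for every continuous
`g`. Squeezing the indicator of `(-∞, 1]` between two such test functions and using the continuity
of `Y ↦ m₀ (-∞, Y] = C Y^r / Γ(r + 1)` gives `t ^ r μ [0, 1/t] = m_t (-∞, 1] → C / Γ(r + 1)`.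
-/

section Moments

variable {ι : Type*} {l : Filter ι} {a b : ℝ}

theorem ContinuousOn.integrable_of_ae_mem_Icc {ν : Measure ℝ} [IsFiniteMeasure ν] {g : ℝ → ℝ}
    (hg : ContinuousOn g (Icc a b)) (hν : ∀ᵐ u ∂ν, u ∈ Icc a b) : Integrable g ν := by
  rw [← Measure.restrict_eq_self_of_ae_mem hν]
  exact hg.integrableOn_compact isCompact_Icc

theorem abs_integral_sub_le_of_ae_mem {α : Type*} [MeasurableSpace α] {ν : Measure α}
    [IsFiniteMeasure ν] {s : Set α} (hν : ∀ᵐ u ∂ν, u ∈ s) {f g : α → ℝ} (hf : Integrable f ν)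
    (hg : Integrable g ν) {δ : ℝ} (hfg : ∀ u ∈ s, |f u - g u| ≤ δ) :
    |∫ u, f u ∂ν - ∫ u, g u ∂ν| ≤ δ * ν.real univ := by
  rw [← integral_sub hf hg]
  exact norm_integral_le_of_norm_le_const (hν.mono fun u hu => (norm_eq_abs _).trans_le (hfg u hu))

theorem integral_eval_eq_sum_coeff_mul_integral_pow {ν : Measure ℝ} [IsFiniteMeasure ν]
    (hν : ∀ᵐ u ∂ν, u ∈ Icc a b) (p : ℝ[X]) :
    ∫ u, p.eval u ∂ν = ∑ k ∈ Finset.range (p.natDegree + 1), p.coeff k * ∫ u, u ^ k ∂ν := by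
  simp_rw [eval_eq_sum_range, ← integral_const_mul]
  exact integral_finsetSum _ fun k _ =>
    ((continuous_pow k).continuousOn.integrable_of_ae_mem_Icc hν).const_mul _

theorem tendsto_integral_of_tendsto_moments {ν : ι → Measure ℝ} {ν₀ : Measure ℝ}
    [IsFiniteMeasure ν₀] (hfin : ∀ᶠ i in l, IsFiniteMeasure (ν i))
    (hν : ∀ᶠ i in l, ∀ᵐ u ∂ν i, u ∈ Icc a b) (hν₀ : ∀ᵐ u ∂ν₀, u ∈ Icc a b)
    (hmom : ∀ k : ℕ, Tendsto (fun i => ∫ u, u ^ k ∂ν i) l (𝓝 (∫ u, u ^ k ∂ν₀)))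
    {g : ℝ → ℝ} (hg : ContinuousOn g (Icc a b)) :
    Tendsto (fun i => ∫ u, g u ∂ν i) l (𝓝 (∫ u, g u ∂ν₀)) := by
  have hpoly (p : ℝ[X]) : Tendsto (fun i => ∫ u, p.eval u ∂ν i) l (𝓝 (∫ u, p.eval u ∂ν₀)) := by
    rw [integral_eval_eq_sum_coeff_mul_integral_pow hν₀]
    refine (tendsto_finsetSum _ fun k _ => (hmom k).const_mul (p.coeff k)).congr' ?_
    filter_upwards [hfin, hν] with i _ hi
    exact (integral_eval_eq_sum_coeff_mul_integral_pow hi p).symm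
  have hmass : Tendsto (fun i => (ν i).real univ) l (𝓝 (ν₀.real univ)) := by
    simpa using hmom 0
  rw [Metric.tendsto_nhds]
  intro ε hε
  set M := ν₀.real univ + 1
  have hM : 0 < M := by positivity
  obtain ⟨p, hp⟩ := exists_polynomial_near_of_continuousOn a b g hg (ε / (3 * M)) (by positivity)
  have hgp (u) (hu : u ∈ Icc a b) : |g u - p.eval u| ≤ ε / (3 * M) := by
    rw [abs_sub_comm]; exact (hp u hu).le
  have hδM : ε / (3 * M) * M = ε / 3 := by field_simp
  have hcont := p.continuous.continuousOn (s := Icc a b)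
  filter_upwards [hfin, hν, hmass.eventually (gt_mem_nhds (lt_add_one _)),
    Metric.tendsto_nhds.1 (hpoly p) (ε / 3) (by positivity)] with i _ hi hmassi hpi
  have hνi := abs_integral_sub_le_of_ae_mem hi (hg.integrable_of_ae_mem_Icc hi)
    (hcont.integrable_of_ae_mem_Icc hi) hgp
  have hν₀ := abs_integral_sub_le_of_ae_mem hν₀ (hg.integrable_of_ae_mem_Icc hν₀)
    (hcont.integrable_of_ae_mem_Icc hν₀) hgp
  have hνi' : ε / (3 * M) * (ν i).real univ ≤ ε / 3 :=
    hδM ▸ mul_le_mul_of_nonneg_left hmassi.le (by positivity)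
  have hν₀' : ε / (3 * M) * ν₀.real univ ≤ ε / 3 :=
    hδM ▸ mul_le_mul_of_nonneg_left (lt_add_one _).le (by positivity)
  rw [Real.dist_eq] at hpi ⊢
  rw [abs_le] at hνi hν₀
  rw [abs_lt] at hpi ⊢
  constructor <;> linarith

end Moments

section ExpPush

noncomputable def laplacePush (m : Measure ℝ) : Measure ℝ :=
  (m.withDensity fun y => ENNReal.ofReal (exp (-y))).map fun y => exp (-y)

variable {m : Measure ℝ}

theorem integral_laplacePush {g : ℝ → ℝ} (hg : Continuous g) :
    ∫ u, g u ∂laplacePush m = ∫ y, exp (-y) * g (exp (-y)) ∂m := by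
  rw [laplacePush, integral_map (by fun_prop) hg.aestronglyMeasurable,
    integral_withDensity_eq_integral_toReal_smul (by fun_prop)
      (ae_of_all _ fun _ => ENNReal.ofReal_lt_top)]
  simp only [ENNReal.toReal_ofReal (exp_pos _).le, smul_eq_mul]

theorem integral_pow_laplacePush (k : ℕ) :
    ∫ u, u ^ k ∂laplacePush m = ∫ y, exp (-((k + 1) * y)) ∂m := by
  rw [integral_laplacePush (continuous_pow k)]
  congr 1 with y
  rw [← exp_nat_mul, ← exp_add]
  ring_nf

theorem isFiniteMeasure_laplacePush (hm : Integrable (fun y => exp (-y)) m) :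
    IsFiniteMeasure (laplacePush m) := by
  have := isFiniteMeasure_withDensity_ofReal hm.2
  unfold laplacePush
  infer_instance

theorem ae_mem_Icc_laplacePush (hm : ∀ᵐ y ∂m, 0 ≤ y) : ∀ᵐ u ∂laplacePush m, u ∈ Icc 0 1 := by
  refine (ae_map_iff (by fun_prop) measurableSet_Icc).2 ?_
  exact (withDensity_absolutelyContinuous _ _).ae_le
    (hm.mono fun y hy => ⟨(exp_pos _).le, exp_le_one_iff.2 (by linarith)⟩)

end ExpPush

theorem measure_Iic_lt_top_of_integrable_exp {m : Measure ℝ}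
    (hm : Integrable (fun y => exp (-y)) m) (Y : ℝ) : m (Iic Y) < ⊤ :=
  (measure_mono fun y (hy : y ≤ Y) => show exp (-Y) ≤ exp (-y) from exp_le_exp.2 (by linarith)
    ).trans_lt (hm.measure_ge_lt_top (exp_pos _))

theorem integral_mem_Icc_measureReal_Iic {m : Measure ℝ}
    (hm : Integrable (fun y => exp (-y)) m) {φ : ℝ → ℝ} (hφ : Continuous φ) {Y₁ Y₂ : ℝ}
    (h₁ : ∀ y, (Iic Y₁).indicator 1 y ≤ φ y) (h₂ : ∀ y, φ y ≤ (Iic Y₂).indicator 1 y) :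
    ∫ y, φ y ∂m ∈ Icc (m.real (Iic Y₁)) (m.real (Iic Y₂)) := by
  have hind (Y : ℝ) : Integrable ((Iic Y).indicator (1 : ℝ → ℝ)) m :=
    (integrable_indicator_iff measurableSet_Iic).2
      (integrableOn_const (measure_Iic_lt_top_of_integrable_exp hm Y).ne)
  have hφm : Integrable φ m := (hind Y₂).mono' hφ.aestronglyMeasurable (ae_of_all _ fun y => by
    rw [norm_eq_abs, abs_of_nonneg ((indicator_nonneg (fun _ _ => zero_le_one) y).trans (h₁ y))]
    exact h₂ y)
  rw [← integral_indicator_one measurableSet_Iic, ← integral_indicator_one measurableSet_Iic]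
  exact ⟨integral_mono (hind Y₁) hφm h₁, integral_mono hφm (hind Y₂) h₂⟩

structure TendstoLaplace {ι : Type*} (m : ι → Measure ℝ) (l : Filter ι) (m₀ : Measure ℝ) :
    Prop where
  ae_nonneg : ∀ᶠ i in l, ∀ᵐ y ∂m i, 0 ≤ y
  integrable : ∀ᶠ i in l, Integrable (fun y => exp (-y)) (m i)
  ae_nonneg_limit : ∀ᵐ y ∂m₀, 0 ≤ y
  integrable_limit : Integrable (fun y => exp (-y)) m₀
  tendsto_integral : ∀ n : ℕ, Tendsto (fun i => ∫ y, exp (-((n + 1) * y)) ∂m i) l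
    (𝓝 (∫ y, exp (-((n + 1) * y)) ∂m₀))

namespace TendstoLaplace

variable {ι : Type*} {l : Filter ι} {m : ι → Measure ℝ} {m₀ : Measure ℝ}

theorem tendsto_integral_exp_mul_comp (hm : TendstoLaplace m l m₀) {g : ℝ → ℝ} (hg : Continuous g) :
    Tendsto (fun i => ∫ y, exp (-y) * g (exp (-y)) ∂m i) l
      (𝓝 (∫ y, exp (-y) * g (exp (-y)) ∂m₀)) := by
  have := isFiniteMeasure_laplacePush hm.integrable_limit
  simp_rw [← integral_laplacePush hg]
  refine tendsto_integral_of_tendsto_moments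
    (hm.integrable.mono fun _ => isFiniteMeasure_laplacePush)
    (hm.ae_nonneg.mono fun _ => ae_mem_Icc_laplacePush)
    (ae_mem_Icc_laplacePush hm.ae_nonneg_limit) (fun k => ?_) hg.continuousOn
  simpa only [integral_pow_laplacePush] using hm.tendsto_integral k

theorem tendsto_integral_comp_exp (hm : TendstoLaplace m l m₀) {h : ℝ → ℝ} (hh : Continuous h)
    {β : ℝ} (hβ : 0 < β) (hhβ : ∀ u ≤ β, h u = 0) :
    Tendsto (fun i => ∫ y, h (exp (-y)) ∂m i) l (𝓝 (∫ y, h (exp (-y)) ∂m₀)) := by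
  -- `h u / max u β` is a continuous stand-in for `h u / u`, since `h` vanishes on `(-∞, β]`.
  have hdiv (u : ℝ) (hu : 0 < u) : u * (h u / max u β) = h u := by
    rcases le_total u β with huβ | hβu
    · simp [hhβ u huβ]
    · rw [max_eq_left hβu]; field_simp
  simpa only [hdiv _ (exp_pos _)] using
    hm.tendsto_integral_exp_mul_comp (g := fun u => h u / max u β)
      (hh.div (continuous_id.max continuous_const) fun _ => (lt_max_of_lt_right hβ).ne')

theorem exists_tendsto_integral_between_indicator_Iic (hm : TendstoLaplace m l m₀) {Y₁ Y₂ : ℝ}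
    (hY : Y₁ < Y₂) :
    ∃ φ : ℝ → ℝ, Continuous φ ∧ (∀ y, (Iic Y₁).indicator 1 y ≤ φ y) ∧
      (∀ y, φ y ≤ (Iic Y₂).indicator 1 y) ∧
      Tendsto (fun i => ∫ y, φ y ∂m i) l (𝓝 (∫ y, φ y ∂m₀)) := by
  set α := exp (-Y₂)
  set β := exp (-Y₁)
  have hα : 0 < α := exp_pos _
  have hαβ : α < β := exp_lt_exp.2 (by linarith)
  have hh : Continuous fun u => smoothTransition ((u - α) / (β - α)) := by fun_prop
  refine ⟨fun y => smoothTransition ((exp (-y) - α) / (β - α)), by fun_prop, fun y => ?_,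
    fun y => ?_, hm.tendsto_integral_comp_exp hh hα
      fun u hu => smoothTransition.zero_of_nonpos
        (div_nonpos_of_nonpos_of_nonneg (by linarith) (by linarith))⟩
  · by_cases hy : y ∈ Iic Y₁
    · have : β ≤ exp (-y) := exp_le_exp.2 (neg_le_neg hy)
      rw [indicator_of_mem hy, Pi.one_apply]
      exact (smoothTransition.one_of_one_le ((one_le_div (by linarith)).2 (by linarith))).ge
    · rw [indicator_of_notMem hy]
      exact smoothTransition.nonneg _
  · by_cases hy : y ∈ Iic Y₂
    · rw [indicator_of_mem hy]
      exact smoothTransition.le_one _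
    · have : exp (-y) ≤ α := exp_le_exp.2 (neg_le_neg (not_le.1 hy).le)
      rw [indicator_of_notMem hy]
      exact (smoothTransition.zero_of_nonpos
        (div_nonpos_of_nonpos_of_nonneg (by linarith) (by linarith))).le

theorem tendsto_measureReal_Iic (hm : TendstoLaplace m l m₀) {Y : ℝ}
    (hY : ContinuousAt (fun y => m₀.real (Iic y)) Y) :
    Tendsto (fun i => (m i).real (Iic Y)) l (𝓝 (m₀.real (Iic Y))) := by
  refine tendsto_order.2 ⟨fun M hM => ?_, fun M hM => ?_⟩
  · obtain ⟨Y', hMY', hY'⟩ := (((hY.eventually (lt_mem_nhds hM)).filter_mono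
      nhdsWithin_le_nhds).and (self_mem_nhdsWithin (s := Iio Y))).exists
    obtain ⟨φ, hφ, h₁, h₂, hlim⟩ := hm.exists_tendsto_integral_between_indicator_Iic hY'
    have hMφ : M < ∫ y, φ y ∂m₀ :=
      hMY'.trans_le (integral_mem_Icc_measureReal_Iic hm.integrable_limit hφ h₁ h₂).1
    filter_upwards [hlim.eventually (lt_mem_nhds hMφ), hm.integrable] with i hi hmi
    exact hi.trans_le (integral_mem_Icc_measureReal_Iic hmi hφ h₁ h₂).2
  · obtain ⟨Y', hMY', hY'⟩ := (((hY.eventually (gt_mem_nhds hM)).filter_mono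
      nhdsWithin_le_nhds).and (self_mem_nhdsWithin (s := Ioi Y))).exists
    obtain ⟨φ, hφ, h₁, h₂, hlim⟩ := hm.exists_tendsto_integral_between_indicator_Iic hY'
    have hMφ : ∫ y, φ y ∂m₀ < M :=
      (integral_mem_Icc_measureReal_Iic hm.integrable_limit hφ h₁ h₂).2.trans_lt hMY'
    filter_upwards [hlim.eventually (gt_mem_nhds hMφ), hm.integrable] with i hi hmi
    exact (integral_mem_Icc_measureReal_Iic hmi hφ h₁ h₂).1.trans_lt hi

end TendstoLaplace

section KaramataMeasures

variable {μ : Measure ℝ} {r t : ℝ}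

noncomputable def rescaledMeasure (μ : Measure ℝ) (r t : ℝ) : Measure ℝ :=
  ENNReal.ofReal (t ^ r) • μ.map (t * ·)

theorem integral_rescaledMeasure {f : ℝ → ℝ} (hf : Continuous f) (ht : 0 < t) :
    ∫ y, f y ∂rescaledMeasure μ r t = t ^ r * ∫ x, f (t * x) ∂μ := by
  rw [rescaledMeasure, integral_smul_measure, integral_map (by fun_prop) hf.aestronglyMeasurable,
    ENNReal.toReal_ofReal (rpow_nonneg ht.le r), smul_eq_mul]

theorem ae_nonneg_rescaledMeasure (hμ : μ (Iio 0) = 0) (ht : 0 < t) :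
    ∀ᵐ y ∂rescaledMeasure μ r t, 0 ≤ y := by
  refine Measure.ae_smul_measure_le _ ((ae_map_iff (by fun_prop) measurableSet_Ici).2 ?_)
  refine (measure_eq_zero_iff_ae_notMem.1 hμ).mono fun x hx => ?_
  exact mul_nonneg ht.le (not_lt.1 hx)

theorem integrable_exp_neg_rescaledMeasure (hint : Integrable (fun x => exp (-(t * x))) μ) :
    Integrable (fun y => exp (-y)) (rescaledMeasure μ r t) :=
  ((integrable_map_measure (g := fun y => exp (-y)) (f := (t * ·)) (by fun_prop)
    (by fun_prop)).2 hint).smul_measure ENNReal.ofReal_ne_top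

theorem measureReal_Iic_one_rescaledMeasure (ht : 0 < t) :
    (rescaledMeasure μ r t).real (Iic 1) = t ^ r * μ.real (Iic t⁻¹) := by
  rw [rescaledMeasure, measureReal_def, Measure.smul_apply,
    Measure.map_apply (by fun_prop) measurableSet_Iic, preimage_const_mul_Iic₀ _ ht, one_div,
    smul_eq_mul, ENNReal.toReal_mul, ENNReal.toReal_ofReal (rpow_nonneg ht.le r), measureReal_def]

theorem tendsto_integral_exp_rescaledMeasure {C : ℝ}
    (hlim : Tendsto (fun t : ℝ => t ^ r * ∫ x, exp (-(t * x)) ∂μ) (𝓝[>] 0) (𝓝 C))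
    {c : ℝ} (hc : 0 < c) :
    Tendsto (fun t => ∫ y, exp (-(c * y)) ∂rescaledMeasure μ r t) (𝓝[>] 0)
      (𝓝 ((1 / c) ^ r * C)) := by
  have hct : Tendsto (c * ·) (𝓝[>] 0) (𝓝[>] (0 : ℝ)) := by
    have := tendsto_comap (f := (c * ·)) (x := 𝓝[>] (0 : ℝ))
    rwa [comap_mulLeft_nhdsGT_zero hc] at this
  refine ((hlim.comp hct).const_mul ((1 / c) ^ r)).congr' ?_
  filter_upwards [self_mem_nhdsWithin] with t (ht : 0 < t)
  simp only [Function.comp_apply, integral_rescaledMeasure (by fun_prop : Continuous fun y =>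
    exp (-(c * y))) ht, mul_rpow hc.le ht.le, ← mul_assoc]
  rw [← mul_rpow (by positivity) hc.le, one_div_mul_cancel hc.ne', one_rpow, one_mul]

noncomputable def powerDensityMeasure (c r : ℝ) : Measure ℝ :=
  (volume.restrict (Ioi 0)).withDensity fun y => ENNReal.ofReal (c * y ^ (r - 1))

variable {c : ℝ}

theorem ae_nonneg_powerDensityMeasure : ∀ᵐ y ∂powerDensityMeasure c r, 0 ≤ y :=
  (withDensity_absolutelyContinuous _ _).ae_le
    ((ae_restrict_mem measurableSet_Ioi).mono fun _ hy => le_of_lt hy)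

theorem toReal_density_powerDensityMeasure (hc : 0 ≤ c) :
    ∀ᵐ y ∂volume.restrict (Ioi 0), (ENNReal.ofReal (c * y ^ (r - 1))).toReal = c * y ^ (r - 1) :=
  (ae_restrict_mem measurableSet_Ioi).mono fun _ hy =>
    ENNReal.toReal_ofReal (mul_nonneg hc (rpow_nonneg (le_of_lt hy) _))

theorem integral_powerDensityMeasure (hc : 0 ≤ c) (f : ℝ → ℝ) :
    ∫ y, f y ∂powerDensityMeasure c r = c * ∫ y in Ioi 0, y ^ (r - 1) * f y := by
  rw [powerDensityMeasure, integral_withDensity_eq_integral_toReal_smul (by fun_prop)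
      (ae_of_all _ fun _ => ENNReal.ofReal_lt_top), ← integral_const_mul]
  refine integral_congr_ae ((toReal_density_powerDensityMeasure (r := r) hc).mono fun y hy => ?_)
  simp only [hy, smul_eq_mul, mul_assoc]

theorem integrable_exp_neg_powerDensityMeasure (hr : 0 < r) (hc : 0 ≤ c) :
    Integrable (fun y => exp (-y)) (powerDensityMeasure c r) := by
  rw [powerDensityMeasure, integrable_withDensity_iff_integrable_smul' (by fun_prop)
    (ae_of_all _ fun _ => ENNReal.ofReal_lt_top)]
  refine ((GammaIntegral_convergent hr).const_mul c).congr
    ((toReal_density_powerDensityMeasure (r := r) hc).mono fun y hy => ?_)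
  simp only [hy, smul_eq_mul]
  ring

theorem measureReal_Iic_powerDensityMeasure (hr : 0 < r) (hc : 0 ≤ c) {Y : ℝ} (hY : 0 ≤ Y) :
    (powerDensityMeasure c r).real (Iic Y) = c * Y ^ r / r := by
  have hint : IntegrableOn (fun y => c * y ^ (r - 1)) (Ioc 0 Y) :=
    (intervalIntegral.intervalIntegrable_rpow' (by linarith)).1.const_mul c
  rw [measureReal_def, powerDensityMeasure, withDensity_apply _ measurableSet_Iic,
    Measure.restrict_restrict measurableSet_Iic, Iic_inter_Ioi,
    ← ofReal_integral_eq_lintegral_ofReal hint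
      ((ae_restrict_mem measurableSet_Ioc).mono fun y hy => mul_nonneg hc (rpow_nonneg hy.1.le _)),
    ENNReal.toReal_ofReal (setIntegral_nonneg measurableSet_Ioc
      fun y hy => mul_nonneg hc (rpow_nonneg hy.1.le _)),
    integral_const_mul, ← intervalIntegral.integral_of_le hY, integral_rpow (Or.inl (by linarith)),
    sub_add_cancel, zero_rpow hr.ne', sub_zero, mul_div_assoc]

theorem continuousAt_measureReal_Iic_powerDensityMeasure (hr : 0 < r) (hc : 0 ≤ c) {Y : ℝ}
    (hY : 0 < Y) : ContinuousAt (fun y => (powerDensityMeasure c r).real (Iic y)) Y := by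
  refine ContinuousAt.congr ?_ (eventually_of_mem (Ioi_mem_nhds hY) fun y (hy : 0 < y) =>
    (measureReal_Iic_powerDensityMeasure hr hc hy.le).symm)
  exact ((continuousAt_rpow_const _ _ (Or.inl hY.ne')).const_mul c).div_const r

theorem tendstoLaplace_rescaledMeasure {C : ℝ} (hμ : μ (Iio 0) = 0)
    (hint : ∀ t : ℝ, 0 < t → Integrable (fun x => exp (-(t * x))) μ) (hr : 0 < r) (hC : 0 ≤ C)
    (hlim : Tendsto (fun t : ℝ => t ^ r * ∫ x, exp (-(t * x)) ∂μ) (𝓝[>] 0) (𝓝 C)) :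
    TendstoLaplace (rescaledMeasure μ r) (𝓝[>] 0) (powerDensityMeasure (C / Gamma r) r) where
  ae_nonneg := eventually_mem_nhdsWithin.mono fun _ ht => ae_nonneg_rescaledMeasure hμ ht
  integrable := eventually_mem_nhdsWithin.mono fun t ht =>
    integrable_exp_neg_rescaledMeasure (hint t ht)
  ae_nonneg_limit := ae_nonneg_powerDensityMeasure
  integrable_limit := integrable_exp_neg_powerDensityMeasure hr (by positivity)
  tendsto_integral n := by
    rw [integral_powerDensityMeasure (by positivity),
      integral_rpow_mul_exp_neg_mul_Ioi hr (by positivity)]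
    convert tendsto_integral_exp_rescaledMeasure hlim (c := n + 1) (by positivity) using 2
    field_simp [(Gamma_pos_of_pos hr).ne']

end KaramataMeasures

/-- **Karamata's Tauberian theorem.** If the Laplace transform `L(t)` of a measure `μ`
on `[0,∞)` is finite for all `t > 0` and `t^r · L(t) → C` as `t → 0⁺`, then
`μ([0,x]) / x^r → C / Γ(r+1)` as `x → ∞`. -/
theorem karamata_tauberian
    (μ : Measure ℝ) (hsupp : μ (Set.Iio 0) = 0)
    (hint : ∀ t : ℝ, 0 < t → Integrable (fun x => Real.exp (-(t * x))) μ)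
    (r C : ℝ) (hr : 0 < r) (hC : 0 ≤ C)
    (hlim : Tendsto (fun t : ℝ => t ^ r * ∫ x, Real.exp (-(t * x)) ∂μ)
      (nhdsWithin 0 (Set.Ioi 0)) (nhds C)) :
    Tendsto (fun x : ℝ => (μ (Set.Icc 0 x)).toReal / x ^ r) atTop
      (nhds (C / Real.Gamma (r + 1))) := by
  have hc : 0 ≤ C / Gamma r := div_nonneg hC (Gamma_pos_of_pos hr).le
  have hdistrib := (tendstoLaplace_rescaledMeasure hsupp hint hr hC hlim).tendsto_measureReal_Iic
    (continuousAt_measureReal_Iic_powerDensityMeasure hr hc one_pos)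
  rw [measureReal_Iic_powerDensityMeasure hr hc zero_le_one, one_rpow, mul_one, div_div,
    mul_comm, ← Gamma_add_one hr.ne'] at hdistrib
  refine (hdistrib.comp tendsto_inv_atTop_nhdsGT_zero).congr' ?_
  filter_upwards [eventually_gt_atTop 0] with x hx
  have hIcc : Icc 0 x = Iic x \ Iio 0 := by ext; simp [and_comm]
  rw [Function.comp_apply, measureReal_Iic_one_rescaledMeasure (inv_pos.2 hx), inv_inv,
    inv_rpow hx.le, hIcc, measure_sdiff_null hsupp, measureReal_def, inv_mul_eq_div]
end
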